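/- White noise on the unitary dual of a compact group is stationary: if Z is a decomposable random field with E(Z_π conj(Z_{π'})) = δ_{π,π'} for all π, π' ∈ Ĝ, then E(Z_{π₁} conj(Z_{π₂})) = E(Z_{π₁⊗π₂*} conj(Z_ε)) for all π₁, π₂ ∈ Ĝ. -/

import Mathlib

open Matrix Kronecker ComplexConjugate
open scoped Classical ComplexOrder

noncomputable section

universe u

variable (G : Type u) [Group G] [TopologicalSpace G]

/-- A continuous finite-dimensional unitary representation of `G`,
realised as a family of unitary matrices. -/
structure CRep where
  ι : Type
  [fin : Fintype ι]
  [dec : DecidableEq ι]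
  ρ : G → Matrix ι ι ℂ
  map_one : ρ 1 = 1
  map_mul : ∀ g h : G, ρ (g * h) = ρ g * ρ h
  unitary : ∀ g : G, ρ g ∈ Matrix.unitaryGroup ι ℂ
  cont : Continuous ρ

namespace CRep

attribute [instance] CRep.fin CRep.dec

variable {G}

/-- The character of a representation. -/
def char (π : CRep G) (g : G) : ℂ := (π.ρ g).trace

/-- The trivial representation. -/
def trivialRep : CRep G where
  ι := Unit
  ρ := fun _ => 1
  map_one := rfl
  map_mul := by intros; simp
  unitary := fun _ => one_mem _
  cont := continuous_const

/-- The conjugate (contragredient) representation. -/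
def conjRep (π : CRep G) : CRep G where
  ι := π.ι
  ρ := fun g => (π.ρ g).map (starRingEnd ℂ)
  map_one := by
    try dsimp only
    rw [π.map_one]
    exact Matrix.map_one _ (map_zero _) (_root_.map_one _)
  map_mul := by
    intro g h
    try dsimp only
    rw [π.map_mul, Matrix.map_mul]
  unitary := by
    intro g
    try dsimp only
    have h := π.unitary g
    rw [Matrix.mem_unitaryGroup_iff] at h ⊢
    have hs : star ((π.ρ g).map (starRingEnd ℂ)) = (π.ρ g)ᵀ := by
      ext i j
      simp [Matrix.conjTranspose_apply]
    calc (π.ρ g).map (starRingEnd ℂ) * star ((π.ρ g).map (starRingEnd ℂ))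
        = (π.ρ g).map (starRingEnd ℂ) * (π.ρ g)ᵀ := by rw [hs]
      _ = (π.ρ g * star (π.ρ g)).map (starRingEnd ℂ) := by
          rw [Matrix.map_mul]
          congr 1
          ext i j
          simp [Matrix.conjTranspose_apply]
      _ = 1 := by rw [h]; exact Matrix.map_one _ (map_zero _) (_root_.map_one _)
  cont := π.cont.matrix_map Complex.continuous_conj

/-- The tensor product of two representations (Kronecker product of matrices). -/
def tensor (π₁ π₂ : CRep G) : CRep G where
  ι := π₁.ι × π₂.ι
  ρ := fun g => π₁.ρ g ⊗ₖ π₂.ρ g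
  map_one := by
    try dsimp only
    rw [π₁.map_one, π₂.map_one]; exact Matrix.one_kronecker_one
  map_mul := by
    intro g h
    try dsimp only
    rw [π₁.map_mul, π₂.map_mul, Matrix.mul_kronecker_mul]
  unitary := by
    intro g
    try dsimp only
    have h₁ := π₁.unitary g
    have h₂ := π₂.unitary g
    rw [Matrix.mem_unitaryGroup_iff] at h₁ h₂ ⊢
    have hstar : star (π₁.ρ g ⊗ₖ π₂.ρ g) = star (π₁.ρ g) ⊗ₖ star (π₂.ρ g) := by
      ext i j
      simp [Matrix.conjTranspose_apply, Matrix.kroneckerMap_apply]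
    rw [hstar, ← Matrix.mul_kronecker_mul, h₁, h₂, Matrix.one_kronecker_one]
  cont := continuous_matrix fun i j =>
    (π₁.cont.matrix_elem i.1 j.1).mul (π₂.cont.matrix_elem i.2 j.2)

/-- Irreducibility: every matrix commuting with the representation is scalar (Schur). -/
def IsIrreducible (π : CRep G) : Prop :=
  ∀ A : Matrix π.ι π.ι ℂ, (∀ g, A * π.ρ g = π.ρ g * A) →
    ∃ c : ℂ, A = c • (1 : Matrix π.ι π.ι ℂ)

/-- (Unitary) equivalence of representations. -/
def Equiv (π₁ π₂ : CRep G) : Prop :=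
  ∃ (f : Matrix π₂.ι π₁.ι ℂ) (f' : Matrix π₁.ι π₂.ι ℂ),
    (∀ g, f * π₁.ρ g = π₂.ρ g * f) ∧ f * f' = 1 ∧ f' * f = 1

end CRep

open MeasureTheory

variable [IsTopologicalGroup G] [CompactSpace G] [MeasurableSpace G] [BorelSpace G]
variable {G}

/-- The multiplicity `M(σ, π) = ∫_G χ_σ(g⁻¹) χ_π(g) dg`. -/
def mult (μ : Measure G) (σ π : CRep G) : ℂ :=
  ∫ g, σ.char g⁻¹ * π.char g ∂μ

variable (G) in
/-- A model of the unitary dual `Ĝ`: a complete irredundant family of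
irreducible unitary representations, containing the trivial representation. -/
structure UnitaryDual where
  idx : Type
  rep : idx → CRep G
  irr : ∀ i, (rep i).IsIrreducible
  complete : ∀ π : CRep G, π.IsIrreducible → ∃ i, CRep.Equiv π (rep i)
  distinct : ∀ i j, CRep.Equiv (rep i) (rep j) → i = j
  e : idx
  he : CRep.Equiv (rep e) CRep.trivialRep

/-- The covariance `E(Y_σ * conj(Y_τ))`. -/
def cov {Ω : Type*} [MeasurableSpace Ω] (P : Measure Ω)
    (Y : CRep G → Ω → ℂ) (σ τ : CRep G) : ℂ :=
  ∫ ω, Y σ ω * (starRingEnd ℂ) (Y τ ω) ∂P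

/-- Wide-sense stationarity of a random field on the unitary dual. -/
def Stationary {Ω : Type*} [MeasurableSpace Ω] (P : Measure Ω)
    (D : UnitaryDual G) (Y : CRep G → Ω → ℂ) : Prop :=
  ∀ i j : D.idx,
    cov P Y (D.rep i) (D.rep j)
      = cov P Y ((D.rep i).tensor (D.rep j).conjRep) (D.rep D.e)

/-- Decomposability of a random field over the dual. -/
def Decomposable (μ : Measure G) {Ω : Type*} [MeasurableSpace Ω] (P : Measure Ω)
    (D : UnitaryDual G) (Y : CRep G → Ω → ℂ) : Prop :=
  ∀ σ : CRep G, ∀ᵐ ω ∂P,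
    Y σ ω = ∑' i : D.idx, mult μ σ (D.rep i) * Y (D.rep i) ω

/-!
Expanding `Z_σ` by decomposability and using the orthonormality of white noise gives
`E(Z_σ conj(Z_π)) = M(σ, π)` for every `π ∈ Ĝ`. Both sides of stationarity are therefore
multiplicities, and they agree pointwise under the integral: by unitarity `χ_π(g⁻¹) = conj(χ_π(g))`,
so `χ_{π₁ ⊗ π₂*}(g⁻¹) χ_ε(g) = χ_{π₁}(g⁻¹) χ_{π₂}(g)`.
-/

section WhiteNoise

variable {H : Type*} [Group H] [TopologicalSpace H]

namespace CRep

lemma ρ_inv (π : CRep H) (g : H) : π.ρ g⁻¹ = star (π.ρ g) :=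
  (left_inv_eq_right_inv (Matrix.mem_unitaryGroup_iff'.mp (π.unitary g))
    (by rw [← π.map_mul, mul_inv_cancel, π.map_one])).symm

lemma char_inv (π : CRep H) (g : H) : π.char g⁻¹ = conj (π.char g) := by
  rw [char, char, ρ_inv]
  exact Matrix.trace_conjTranspose _

lemma char_conjRep (π : CRep H) (g : H) : π.conjRep.char g = conj (π.char g) :=
  (AddMonoidHom.map_trace _ _).symm

lemma char_tensor (π₁ π₂ : CRep H) (g : H) :
    (π₁.tensor π₂).char g = π₁.char g * π₂.char g :=
  Matrix.trace_kronecker _ _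

lemma Equiv.char_eq {π₁ π₂ : CRep H} (h : π₁.Equiv π₂) (g : H) : π₂.char g = π₁.char g := by
  obtain ⟨f, f', hf, hff', hf'f⟩ := h
  have hconj : π₂.ρ g = f * π₁.ρ g * f' := by
    rw [hf, Matrix.mul_assoc, hff', Matrix.mul_one]
  rw [char, char, hconj, Matrix.trace_mul_cycle, hf'f, Matrix.one_mul]

lemma char_trivialRep (g : H) : (trivialRep : CRep H).char g = 1 := by
  show Matrix.trace (1 : Matrix Unit Unit ℂ) = 1
  simp

end CRep

lemma UnitaryDual.char_e (D : UnitaryDual H) (g : H) : (D.rep D.e).char g = 1 := by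
  rw [← D.he.char_eq, CRep.char_trivialRep]

variable {Ω : Type*} [MeasurableSpace Ω] {P : Measure Ω} {Y : CRep H → Ω → ℂ}

lemma integrable_mul_conj_of_memLp_two {f g : Ω → ℂ} (hf : MemLp f 2 P) (hg : MemLp g 2 P) :
    Integrable (fun ω => f ω * conj (g ω)) P :=
  hf.integrable_mul hg.star

lemma cov_eq_sum_of_ae_eq (hL2 : ∀ σ, MemLp (Y σ) 2 P) {ι : Type*} (s : Finset ι)
    (c : ι → ℂ) (X : ι → CRep H) {σ : CRep H}
    (hσ : ∀ᵐ ω ∂P, Y σ ω = ∑ k ∈ s, c k * Y (X k) ω) (τ : CRep H) :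
    cov P Y σ τ = ∑ k ∈ s, c k * cov P Y (X k) τ := by
  have hae : ∀ᵐ ω ∂P, Y σ ω * conj (Y τ ω) = ∑ k ∈ s, c k * (Y (X k) ω * conj (Y τ ω)) := by
    filter_upwards [hσ] with ω hω
    simp only [hω, Finset.sum_mul, mul_assoc]
  rw [cov, integral_congr_ae hae, integral_finsetSum _ fun k _ =>
    (integrable_mul_conj_of_memLp_two (hL2 _) (hL2 τ)).const_mul _]
  simp only [integral_const_mul, cov]

variable [MeasurableSpace H]

lemma mult_tensor_conjRep_of_char_eq_one (μ : Measure H) (π₁ π₂ τ : CRep H)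
    (hτ : ∀ g, τ.char g = 1) :
    mult μ (π₁.tensor π₂.conjRep) τ = mult μ π₁ π₂ := by
  refine integral_congr_ae (Filter.Eventually.of_forall fun g => ?_)
  simp only [CRep.char_tensor, CRep.char_conjRep, CRep.char_inv, hτ, map_mul, Complex.conj_conj,
    mul_one]

variable {μ : Measure H} {D : UnitaryDual H}

lemma Decomposable.ae_eq_finsetSum (hdec : Decomposable μ P D Y) {σ : CRep H}
    (hσ : {i : D.idx | mult μ σ (D.rep i) ≠ 0}.Finite) :
    ∀ᵐ ω ∂P, Y σ ω = ∑ k ∈ hσ.toFinset, mult μ σ (D.rep k) * Y (D.rep k) ω := by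
  filter_upwards [hdec σ] with ω hω
  rw [hω, tsum_eq_sum fun k hk => ?_]
  rw [Set.Finite.mem_toFinset, Set.mem_ofPred_eq, not_not] at hk
  rw [hk, zero_mul]

lemma cov_rep_eq_mult (hL2 : ∀ σ, MemLp (Y σ) 2 P) (hdec : Decomposable μ P D Y)
    (hwn : ∀ i j : D.idx, cov P Y (D.rep i) (D.rep j) = if i = j then 1 else 0)
    {σ : CRep H} (hσ : {i : D.idx | mult μ σ (D.rep i) ≠ 0}.Finite) (j : D.idx) :
    cov P Y σ (D.rep j) = mult μ σ (D.rep j) := by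
  rw [cov_eq_sum_of_ae_eq hL2 _ _ _ (hdec.ae_eq_finsetSum hσ)]
  simp only [hwn, mul_ite, mul_one, mul_zero, Finset.sum_ite_eq', Set.Finite.mem_toFinset,
    Set.mem_ofPred_eq, ite_not]
  exact ite_eq_right_iff.mpr Eq.symm

end WhiteNoise

theorem stmt5_general (μ : Measure G)
    (D : UnitaryDual G) {Ω : Type*} [MeasurableSpace Ω] (P : Measure Ω)
    (Z : CRep G → Ω → ℂ)
    (hL2 : ∀ σ : CRep G, MemLp (Z σ) 2 P)
    (hdec : Decomposable μ P D Z)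
    (hfin : ∀ σ : CRep G, {i : D.idx | mult μ σ (D.rep i) ≠ 0}.Finite)
    (hwn : ∀ i j : D.idx, cov P Z (D.rep i) (D.rep j) = if i = j then 1 else 0) :
    Stationary P D Z := by
  intro i j
  rw [cov_rep_eq_mult hL2 hdec hwn (hfin _), cov_rep_eq_mult hL2 hdec hwn (hfin _),
    mult_tensor_conjRep_of_char_eq_one μ _ _ _ D.char_e]

/-- White noise on the unitary dual of a compact group is stationary. -/
theorem stmt5 (μ : Measure G) [μ.IsHaarMeasure] [IsProbabilityMeasure μ]
    (D : UnitaryDual G) {Ω : Type*} [MeasurableSpace Ω] (P : Measure Ω)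
    [IsProbabilityMeasure P] (Z : CRep G → Ω → ℂ)
    (hL2 : ∀ σ : CRep G, MemLp (Z σ) 2 P)
    (hdec : Decomposable μ P D Z)
    (hfin : ∀ σ : CRep G, {i : D.idx | mult μ σ (D.rep i) ≠ 0}.Finite)
    (hwn : ∀ i j : D.idx, cov P Z (D.rep i) (D.rep j) = if i = j then 1 else 0) :
    Stationary P D Z :=
  stmt5_general μ D P Z hL2 hdec hfin hwn
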